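/- (Corollary 3.1, approximate impulse control) Assume there exist C3 > 0 and σ ∈ (0,1) such that for all ε > 0, all t > 0 and all u0 ∈ L²(Ω), ‖S(t)u0‖² ≤ e^{C3(1 + (1/t)^{σ/(1−σ)})} e^{((C3/t) ln(e + 1/ε))^σ} ‖S(t)u0‖_ω² + ε ‖u0‖². Then for all 0 < L < T, all ε > 0 and every y_e ∈ L²(Ω), there exists f ∈ L²(Ω) such that, setting y(T) := S(T−L)( S(L) y_e + 1_ω f ), one has ‖y(T)‖² ≤ ε ‖y_e‖² and ‖1_ω f‖² ≤ e^{C3(1 + (1/(T−L))^{σ/(1−σ)})} e^{((C3/(T−L)) ln(e + 1/ε))^σ} ‖y_e‖². -/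

import Mathlib

/-!
This is the duality behind the Hilbert Uniqueness Method. Let `A = S(T - L)` and `P = 1_ω`, both
self-adjoint, and `K` the observability constant at time `T - L`. Lax–Milgram solves
`(K A P P A + ε) φ = A z` for `z = S(L) y_e`, the operator being coercive with constant `ε`.
The control `f = -K P A φ` gives `A (z + P f) = ε φ`, and pairing the equation with `φ` gives
`K ‖P A φ‖² + ε ‖φ‖² = ⟨z, A φ⟩ ≤ ‖z‖ ‖A φ‖`; by the observability inequality for `φ` the left
side bounds `‖A φ‖²`, so it is at most `‖z‖² ≤ ‖y_e‖²`, and both estimates follow.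
-/

open MeasureTheory Set Filter
open scoped RealInnerProductSpace

noncomputable section

/-- The heat semigroup `S(t)u0 = sum_j e^{-lam_j t} <u0, Phi_j> Phi_j` on `L2(Omega)`,
given a Hilbert basis `B` of eigenfunctions and eigenvalues `lam`. -/
noncomputable def heatSG {d : ℕ} {Ω : Set (EuclideanSpace ℝ (Fin d))}
    (B : HilbertBasis ℕ ℝ (Lp ℝ 2 (volume.restrict Ω))) (lam : ℕ → ℝ)
    (t : ℝ) (u : Lp ℝ 2 (volume.restrict Ω)) : Lp ℝ 2 (volume.restrict Ω) :=
  ∑' j, (Real.exp (-(lam j) * t) * ⟪u, B j⟫) • B j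

/-- Multiplication by the indicator function `1_omega` on `L2(Omega)`. -/
noncomputable def indLp {d : ℕ} {Ω : Set (EuclideanSpace ℝ (Fin d))}
    (ω : Set (EuclideanSpace ℝ (Fin d))) (hω : MeasurableSet ω)
    (f : Lp ℝ 2 (volume.restrict Ω)) : Lp ℝ 2 (volume.restrict Ω) :=
  MemLp.toLp (ω.indicator ⇑f) ((Lp.memLp f).indicator hω)

section SymmetricMaps

variable {𝕜 E : Type*} [RCLike 𝕜] [NormedAddCommGroup E] [InnerProductSpace 𝕜 E]

def LinearMap.ofSymmetric (f : E → E) (hf : ∀ u v, inner 𝕜 (f u) v = inner 𝕜 u (f v)) :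
    E →ₗ[𝕜] E where
  toFun := f
  map_add' u v := ext_inner_right 𝕜 fun w => by
    rw [hf, inner_add_left, inner_add_left, hf, hf]
  map_smul' c u := ext_inner_right 𝕜 fun w => by
    rw [hf, inner_smul_left, inner_smul_left, hf, RingHom.id_apply]

variable [CompleteSpace E]

def ContinuousLinearMap.ofSymmetric (f : E → E)
    (hf : ∀ u v, inner 𝕜 (f u) v = inner 𝕜 u (f v)) : E →L[𝕜] E :=
  ⟨LinearMap.ofSymmetric f hf, LinearMap.IsSymmetric.continuous hf⟩

@[simp]
theorem ContinuousLinearMap.ofSymmetric_apply (f : E → E)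
    (hf : ∀ u v, inner 𝕜 (f u) v = inner 𝕜 u (f v)) (u : E) :
    ContinuousLinearMap.ofSymmetric f hf u = f u :=
  rfl

theorem ContinuousLinearMap.adjoint_ofSymmetric (f : E → E)
    (hf : ∀ u v, inner 𝕜 (f u) v = inner 𝕜 u (f v)) :
    (ContinuousLinearMap.ofSymmetric f hf).adjoint = ContinuousLinearMap.ofSymmetric f hf :=
  LinearMap.IsSymmetric.clm_adjoint_eq hf

end SymmetricMaps

theorem ContinuousLinearMap.surjective_of_coercive {F : Type*} [NormedAddCommGroup F]
    [InnerProductSpace ℝ F] [CompleteSpace F] (T : F →L[ℝ] F) {c : ℝ} (hc : 0 < c)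
    (hT : ∀ u, c * ‖u‖ * ‖u‖ ≤ ⟪T u, u⟫) : Function.Surjective T := by
  have hB : IsCoercive (innerSL ℝ ∘L T) := ⟨c, hc, hT⟩
  intro b
  refine ⟨hB.continuousLinearEquivOfBilin.symm b, ext_inner_right ℝ fun w => ?_⟩
  rw [← innerSL_apply_apply ℝ, ← ContinuousLinearMap.comp_apply,
    ← hB.continuousLinearEquivOfBilin_apply, ContinuousLinearEquiv.apply_symm_apply]

section Control

variable {E U F : Type*}
  [NormedAddCommGroup E] [InnerProductSpace ℝ E] [CompleteSpace E]
  [NormedAddCommGroup U] [InnerProductSpace ℝ U] [CompleteSpace U]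
  [NormedAddCommGroup F] [InnerProductSpace ℝ F] [CompleteSpace F]

open ContinuousLinearMap in
theorem exists_control_of_observability (A : E →L[ℝ] F) (C : U →L[ℝ] E) {K ε : ℝ}
    (hK : 0 ≤ K) (hε : 0 < ε)
    (hobs : ∀ φ, ‖A.adjoint φ‖ ^ 2 ≤ K * ‖C.adjoint (A.adjoint φ)‖ ^ 2 + ε * ‖φ‖ ^ 2) (z : E) :
    ∃ f, ‖A (z + C f)‖ ^ 2 ≤ ε * ‖z‖ ^ 2 ∧ ‖f‖ ^ 2 ≤ K * ‖z‖ ^ 2 := by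
  set G := A ∘L C
  set T : F →L[ℝ] F := K • (G ∘L G.adjoint) + ε • ContinuousLinearMap.id ℝ F
  have hGadj : ∀ φ, G.adjoint φ = C.adjoint (A.adjoint φ) := fun φ => by simp [G, adjoint_comp]
  have hT_energy : ∀ φ, ⟪T φ, φ⟫ = K * ‖G.adjoint φ‖ ^ 2 + ε * ‖φ‖ ^ 2 := fun φ => by
    simp only [T, add_apply, smul_apply, comp_apply, id_apply, inner_add_left,
      real_inner_smul_left, ← adjoint_inner_right G (G.adjoint φ) φ, real_inner_self_eq_norm_sq]
  obtain ⟨φ, hφ⟩ := T.surjective_of_coercive hε (fun u => by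
    rw [hT_energy]; nlinarith [sq_nonneg ‖G.adjoint u‖]) (A z)
  have henergy_le : ⟪T φ, φ⟫ ≤ ‖z‖ * ‖A.adjoint φ‖ := by
    rw [hφ, ← adjoint_inner_right]
    exact real_inner_le_norm _ _
  have henergy_ge : ‖A.adjoint φ‖ ^ 2 ≤ ⟪T φ, φ⟫ := by rw [hT_energy, hGadj]; exact hobs φ
  -- `⟪T φ, φ⟫ ≤ ‖z‖ ‖A† φ‖ ≤ ‖z‖ √⟪T φ, φ⟫`
  have henergy : ⟪T φ, φ⟫ ≤ ‖z‖ ^ 2 := by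
    nlinarith [norm_nonneg z, norm_nonneg (A.adjoint φ)]
  rw [hT_energy] at henergy
  refine ⟨-K • G.adjoint φ, ?_, ?_⟩
  · have hAf : A (z + C (-K • G.adjoint φ)) = ε • φ := by
      have hTφ : T φ = K • A (C (G.adjoint φ)) + ε • φ := rfl
      rw [map_add, map_smul, map_smul, ← hφ, hTφ]
      module
    have hεφ : ε * ‖φ‖ ^ 2 ≤ ‖z‖ ^ 2 := by nlinarith [sq_nonneg ‖G.adjoint φ‖]
    calc ‖A (z + C (-K • G.adjoint φ))‖ ^ 2 = ε * (ε * ‖φ‖ ^ 2) := by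
          rw [hAf, norm_smul, Real.norm_of_nonneg hε.le]; ring
      _ ≤ ε * ‖z‖ ^ 2 := by gcongr
  · have hKG : K * ‖G.adjoint φ‖ ^ 2 ≤ ‖z‖ ^ 2 := by nlinarith [sq_nonneg ‖φ‖]
    calc ‖-K • G.adjoint φ‖ ^ 2 = K * (K * ‖G.adjoint φ‖ ^ 2) := by
          rw [norm_smul, norm_neg, Real.norm_of_nonneg hK]; ring
      _ ≤ K * ‖z‖ ^ 2 := by gcongr

end Control

namespace HilbertBasis

variable {ι F : Type*} [NormedAddCommGroup F] [InnerProductSpace ℝ F] (b : HilbertBasis ι ℝ F)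

def diagonal (m : ι → ℝ) (u : F) : F :=
  ∑' i, (m i * ⟪u, b i⟫) • b i

variable {m : ι → ℝ}

theorem memℓp_mul_repr (hm : ∀ i, |m i| ≤ 1) (u : F) :
    Memℓp (fun i => m i * b.repr u i) 2 :=
  (lp.memℓp (b.repr u)).mono' fun i => by
    rw [norm_mul, Real.norm_eq_abs]
    exact mul_le_of_le_one_left (norm_nonneg _) (hm i)

theorem hasSum_diagonal (hm : ∀ i, |m i| ≤ 1) (u : F) :
    HasSum (fun i => (m i * ⟪u, b i⟫) • b i) (b.repr.symm ⟨_, b.memℓp_mul_repr hm u⟩) := by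
  convert b.hasSum_repr_symm _ using 3 with i
  exact congrArg (m i * ·) ((real_inner_comm _ _).trans (b.repr_apply_apply u i).symm)

theorem inner_diagonal (hm : ∀ i, |m i| ≤ 1) (u : F) (i : ι) :
    ⟪b i, b.diagonal m u⟫ = m i * ⟪b i, u⟫ := by
  rw [← b.repr_apply_apply, diagonal, (b.hasSum_diagonal hm u).tsum_eq,
    LinearIsometryEquiv.apply_symm_apply, ← b.repr_apply_apply]

theorem inner_diagonal_left_eq_right (hm : ∀ i, |m i| ≤ 1) (u v : F) :
    ⟪b.diagonal m u, v⟫ = ⟪u, b.diagonal m v⟫ := by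
  rw [← b.tsum_inner_mul_inner, ← b.tsum_inner_mul_inner]
  refine tsum_congr fun i => ?_
  rw [real_inner_comm (b i), b.inner_diagonal hm, b.inner_diagonal hm, real_inner_comm (b i) u]
  ring

theorem norm_diagonal_le (hm : ∀ i, |m i| ≤ 1) (u : F) : ‖b.diagonal m u‖ ≤ ‖u‖ := by
  rw [← sq_le_sq₀ (norm_nonneg _) (norm_nonneg _), ← real_inner_self_eq_norm_sq,
    ← real_inner_self_eq_norm_sq, ← b.tsum_inner_mul_inner, ← b.tsum_inner_mul_inner]
  refine (b.summable_inner_mul_inner _ _).tsum_le_tsum (fun i => ?_)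
    (b.summable_inner_mul_inner _ _)
  rw [real_inner_comm (b i), b.inner_diagonal hm, real_inner_comm (b i) u]
  nlinarith [sq_le_one_iff_abs_le_one (m i) |>.mpr (hm i), sq_nonneg ⟪u, b i⟫]

end HilbertBasis

section Indicator

variable {d : ℕ} {Ω : Set (EuclideanSpace ℝ (Fin d))} (ω : Set (EuclideanSpace ℝ (Fin d)))
  (hωm : MeasurableSet ω)

theorem coeFn_indLp (f : Lp ℝ 2 (volume.restrict Ω)) :
    indLp ω hωm f =ᵐ[volume.restrict Ω] ω.indicator f :=
  MemLp.coeFn_toLp _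

theorem inner_indLp_left_eq_right (f g : Lp ℝ 2 (volume.restrict Ω)) :
    ⟪indLp ω hωm f, g⟫ = ⟪f, indLp ω hωm g⟫ := by
  rw [L2.inner_def, L2.inner_def]
  refine integral_congr_ae ?_
  filter_upwards [coeFn_indLp ω hωm f, coeFn_indLp ω hωm g] with x hfx hgx
  rw [hfx, hgx]
  by_cases hx : x ∈ ω <;> simp [hx]

theorem norm_indLp_le (f : Lp ℝ 2 (volume.restrict Ω)) : ‖indLp ω hωm f‖ ≤ ‖f‖ := by
  rw [indLp, Lp.norm_toLp, Lp.norm_def]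
  exact ENNReal.toReal_mono (Lp.eLpNorm_ne_top f) (eLpNorm_indicator_le _)

end Indicator

section HeatSemigroup

variable {d : ℕ} {Ω : Set (EuclideanSpace ℝ (Fin d))}
  (B : HilbertBasis ℕ ℝ (Lp ℝ 2 (volume.restrict Ω))) {lam : ℕ → ℝ} {t : ℝ}

theorem abs_exp_neg_mul_le_one {a t : ℝ} (ha : 0 ≤ a) (ht : 0 ≤ t) : |Real.exp (-a * t)| ≤ 1 := by
  rw [abs_of_pos (Real.exp_pos _), Real.exp_le_one_iff, neg_mul, neg_nonpos]
  exact mul_nonneg ha ht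

theorem inner_heatSG_left_eq_right (hlam : ∀ j, 0 ≤ lam j) (ht : 0 ≤ t)
    (u v : Lp ℝ 2 (volume.restrict Ω)) :
    ⟪heatSG B lam t u, v⟫ = ⟪u, heatSG B lam t v⟫ :=
  B.inner_diagonal_left_eq_right (fun j => abs_exp_neg_mul_le_one (hlam j) ht) u v

theorem norm_heatSG_le (hlam : ∀ j, 0 ≤ lam j) (ht : 0 ≤ t) (u : Lp ℝ 2 (volume.restrict Ω)) :
    ‖heatSG B lam t u‖ ≤ ‖u‖ :=
  B.norm_diagonal_le (fun j => abs_exp_neg_mul_le_one (hlam j) ht) u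

end HeatSemigroup

theorem approximate_impulse_control_general
    (d : ℕ) (Ω ω : Set (EuclideanSpace ℝ (Fin d)))
    (hωm : MeasurableSet ω)
    (B : HilbertBasis ℕ ℝ (Lp ℝ 2 (volume.restrict Ω)))
    (lam : ℕ → ℝ) (hpos : ∀ j, 0 < lam j)
    (σ C3 : ℝ)
    -- the observation estimate (iii)
    (hiii : ∀ ε > 0, ∀ t > 0, ∀ u0 : Lp ℝ 2 (volume.restrict Ω),
      ‖heatSG B lam t u0‖ ^ 2 ≤
        Real.exp (C3 * (1 + (1 / t) ^ (σ / (1 - σ)))) *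
          Real.exp ((C3 / t * Real.log (Real.exp 1 + 1 / ε)) ^ σ) *
            ‖indLp ω hωm (heatSG B lam t u0)‖ ^ 2
        + ε * ‖u0‖ ^ 2) :
    ∀ L T : ℝ, 0 < L → L < T → ∀ ε > 0, ∀ ye : Lp ℝ 2 (volume.restrict Ω),
      ∃ f : Lp ℝ 2 (volume.restrict Ω),
        ‖heatSG B lam (T - L) (heatSG B lam L ye + indLp ω hωm f)‖ ^ 2 ≤ ε * ‖ye‖ ^ 2 ∧
        ‖indLp ω hωm f‖ ^ 2 ≤
          Real.exp (C3 * (1 + (1 / (T - L)) ^ (σ / (1 - σ)))) *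
            Real.exp ((C3 / (T - L) * Real.log (Real.exp 1 + 1 / ε)) ^ σ) * ‖ye‖ ^ 2 := by
  intro L T hL hLT ε hε ye
  have hlam : ∀ j, 0 ≤ lam j := fun j => (hpos j).le
  have ht : 0 < T - L := sub_pos.2 hLT
  obtain ⟨f, hf_final, hf_cost⟩ := exists_control_of_observability
    (.ofSymmetric (heatSG B lam (T - L)) (inner_heatSG_left_eq_right B hlam ht.le))
    (.ofSymmetric (indLp ω hωm) (inner_indLp_left_eq_right ω hωm))
    (K := Real.exp (C3 * (1 + (1 / (T - L)) ^ (σ / (1 - σ)))) *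
      Real.exp ((C3 / (T - L) * Real.log (Real.exp 1 + 1 / ε)) ^ σ)) (by positivity) hε
    (fun φ => by
      simpa only [ContinuousLinearMap.adjoint_ofSymmetric, ContinuousLinearMap.ofSymmetric_apply]
        using hiii ε hε _ ht φ)
    (heatSG B lam L ye)
  have hz : ‖heatSG B lam L ye‖ ≤ ‖ye‖ := norm_heatSG_le B hlam hL.le ye
  simp only [ContinuousLinearMap.ofSymmetric_apply] at hf_final
  refine ⟨f, hf_final.trans (by gcongr), ?_⟩
  calc ‖indLp ω hωm f‖ ^ 2 ≤ ‖f‖ ^ 2 := by gcongr; exact norm_indLp_le ω hωm f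
    _ ≤ _ := hf_cost.trans (by gcongr)

/-- Corollary 3.1, approximate impulse control. -/
theorem approximate_impulse_control
    (d : ℕ) (hd : 1 ≤ d) (Ω ω : Set (EuclideanSpace ℝ (Fin d)))
    (hΩo : IsOpen Ω) (hΩb : Bornology.IsBounded Ω) (hΩc : IsConnected Ω)
    (hωo : IsOpen ω) (hωne : ω.Nonempty) (hωΩ : ω ⊆ Ω) (hωm : MeasurableSet ω)
    (B : HilbertBasis ℕ ℝ (Lp ℝ 2 (volume.restrict Ω)))
    (lam : ℕ → ℝ) (hpos : ∀ j, 0 < lam j) (hmono : Monotone lam)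
    (hlim : Tendsto lam atTop atTop)
    (σ C3 : ℝ) (hσ : σ ∈ Ioo (0:ℝ) 1) (hC3 : 0 < C3)
    -- the observation estimate (iii)
    (hiii : ∀ ε > 0, ∀ t > 0, ∀ u0 : Lp ℝ 2 (volume.restrict Ω),
      ‖heatSG B lam t u0‖ ^ 2 ≤
        Real.exp (C3 * (1 + (1 / t) ^ (σ / (1 - σ)))) *
          Real.exp ((C3 / t * Real.log (Real.exp 1 + 1 / ε)) ^ σ) *
            ‖indLp ω hωm (heatSG B lam t u0)‖ ^ 2
        + ε * ‖u0‖ ^ 2) :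
    ∀ L T : ℝ, 0 < L → L < T → ∀ ε > 0, ∀ ye : Lp ℝ 2 (volume.restrict Ω),
      ∃ f : Lp ℝ 2 (volume.restrict Ω),
        ‖heatSG B lam (T - L) (heatSG B lam L ye + indLp ω hωm f)‖ ^ 2 ≤ ε * ‖ye‖ ^ 2 ∧
        ‖indLp ω hωm f‖ ^ 2 ≤
          Real.exp (C3 * (1 + (1 / (T - L)) ^ (σ / (1 - σ)))) *
            Real.exp ((C3 / (T - L) * Real.log (Real.exp 1 + 1 / ε)) ^ σ) * ‖ye‖ ^ 2 :=
  approximate_impulse_control_general d Ω ω hωm B lam hpos σ C3 hiii
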